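/- Let n ≥ 1 and let p(x) = Σ_{l=0}^{n} (1/(l!·(n−l)!))·G_l(x)·x^{n−l}. Then for each k with 0 ≤ k ≤ n, the k-th derivative of p is given by p^{(k)}(x) = 2ᵏ·Σ_{l=k}^{n} (1/((l−k)!·(n−l)!))·G_{l−k}(x)·x^{n−l}. -/

import Mathlib

open Finset

/-- The Bernoulli polynomial `Bₙ(x)`, with generating function `t·e^{xt}/(e^t−1)`. -/
noncomputable def bernoulliPoly (n : ℕ) (x : ℝ) : ℝ :=
  Polynomial.eval x ((Polynomial.bernoulli n).map (algebraMap ℚ ℝ))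

/-- The Genocchi polynomial `Gₙ(x) = 2·Bₙ(x) − 2^{n+1}·Bₙ(x/2)`, with generating
function `2t·e^{xt}/(e^t+1)`. -/
noncomputable def genocchiPoly (n : ℕ) (x : ℝ) : ℝ :=
  2 * bernoulliPoly n x - 2 ^ (n + 1) * bernoulliPoly n (x / 2)

/-- The Genocchi number `Gₙ = Gₙ(0)`. -/
noncomputable def genocchi (n : ℕ) : ℝ := genocchiPoly n 0

/-- The Euler polynomial `Eₙ(x) = (2·B_{n+1}(x) − 2^{n+2}·B_{n+1}(x/2))/(n+1)`, with
generating function `2·e^{xt}/(e^t+1)`. -/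
noncomputable def eulerPoly (n : ℕ) (x : ℝ) : ℝ :=
  (2 * bernoulliPoly (n + 1) x - 2 ^ (n + 2) * bernoulliPoly (n + 1) (x / 2)) / (n + 1)

/-- The Euler number (at zero) `Eₙ = Eₙ(0)`. -/
noncomputable def eulerNum (n : ℕ) : ℝ := eulerPoly n 0

/-!
The sum is `Cₙ(y)`, where `Cₘ(y) = ∑_{i+j=m} (Gᵢ(y)/i!)·(yʲ/j!)`. Since `Gᵢ' = i·G_{i-1}`
and `G₀ = 0`, both factors are sequences whose derivative lowers the index by one, so the product
rule gives `C'ₘ₊₁ = 2·Cₘ`; iterating `k` times yields `2ᵏ·Cₙ₋ₖ`, which is the right-hand side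
after reindexing.
-/

/-- `∀ i, (f i)' = zeroCons f i` says that differentiation lowers the index, as for `yⁱ/i!`
and `Gᵢ(y)/i!`. -/
def zeroCons {α : Type*} [Zero α] (f : ℕ → α) : ℕ → α
  | 0 => 0
  | i + 1 => f i

section AntidiagonalConvolution

variable {𝕜 : Type*} [NontriviallyNormedField 𝕜] {f g : ℕ → 𝕜 → 𝕜}

theorem hasDerivAt_sum_antidiagonal_mul (hf : ∀ i x, HasDerivAt (f i) (zeroCons f i x) x)
    (hg : ∀ j x, HasDerivAt (g j) (zeroCons g j x) x) (m : ℕ) (x : 𝕜) :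
    HasDerivAt (fun y => ∑ p ∈ antidiagonal (m + 1), f p.1 y * g p.2 y)
      (2 * ∑ p ∈ antidiagonal m, f p.1 x * g p.2 x) x := by
  refine (HasDerivAt.fun_sum (u := antidiagonal (m + 1))
    fun p _ => (hf p.1 x).mul (hg p.2 x)).congr_deriv ?_
  rw [sum_add_distrib, Nat.sum_antidiagonal_succ, Nat.sum_antidiagonal_succ']
  simp only [zeroCons, Pi.zero_apply, zero_mul, mul_zero, zero_add]
  ring

theorem iteratedDeriv_sum_antidiagonal_mul (hf : ∀ i x, HasDerivAt (f i) (zeroCons f i x) x)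
    (hg : ∀ j x, HasDerivAt (g j) (zeroCons g j x) x) {k m : ℕ} (hk : k ≤ m) :
    iteratedDeriv k (fun y => ∑ p ∈ antidiagonal m, f p.1 y * g p.2 y) =
      fun y => 2 ^ k * ∑ p ∈ antidiagonal (m - k), f p.1 y * g p.2 y := by
  induction k with
  | zero => simp
  | succ k ih =>
    obtain ⟨r, hr⟩ : ∃ r, m - k = r + 1 := ⟨m - k - 1, by omega⟩
    rw [iteratedDeriv_succ, ih (by omega), hr, show m - (k + 1) = r by omega]
    funext y
    rw [((hasDerivAt_sum_antidiagonal_mul hf hg r y).const_mul _).deriv, pow_succ, mul_assoc]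

end AntidiagonalConvolution

theorem hasDerivAt_genocchiPoly (n : ℕ) (x : ℝ) :
    HasDerivAt (genocchiPoly n) (n * genocchiPoly (n - 1) x) x := by
  have hB : ∀ y, HasDerivAt (bernoulliPoly n) (n * bernoulliPoly (n - 1) y) y := fun y => by
    refine (Polynomial.hasDerivAt _ y).congr_deriv ?_
    simp [bernoulliPoly, Polynomial.derivative_map, Polynomial.derivative_bernoulli]
  have hB_half := (hB (x / 2)).comp x ((hasDerivAt_id x).div_const 2)
  refine (((hB x).const_mul 2).sub (hB_half.const_mul (2 ^ (n + 1)))).congr_deriv ?_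
  cases n with
  | zero => simp [genocchiPoly]
  | succ m =>
    simp only [genocchiPoly, Nat.add_sub_cancel]
    ring

theorem hasDerivAt_genocchiPoly_div_factorial (i : ℕ) (x : ℝ) :
    HasDerivAt (fun y => genocchiPoly i y / i.factorial)
      (zeroCons (fun i y => genocchiPoly i y / i.factorial) i x) x := by
  refine ((hasDerivAt_genocchiPoly i x).div_const (i.factorial : ℝ)).congr_deriv ?_
  cases i with
  | zero => simp [zeroCons]
  | succ i =>
    simp only [zeroCons, Nat.add_sub_cancel, Nat.factorial_succ, Nat.cast_mul]
    field_simp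

theorem hasDerivAt_pow_div_factorial (j : ℕ) (x : ℝ) :
    HasDerivAt (fun y : ℝ => y ^ j / j.factorial)
      (zeroCons (fun j (y : ℝ) => y ^ j / j.factorial) j x) x := by
  refine ((hasDerivAt_pow j x).div_const (j.factorial : ℝ)).congr_deriv ?_
  cases j with
  | zero => simp [zeroCons]
  | succ j =>
    simp only [zeroCons, Nat.add_sub_cancel, Nat.factorial_succ, Nat.cast_mul]
    field_simp

theorem iteratedDeriv_sum_genocchi_pow_factorial_general (n : ℕ) (k : ℕ) (hk : k ≤ n)
    (x : ℝ) :
    iteratedDeriv k (fun y : ℝ => ∑ l ∈ Finset.range (n + 1),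
        (1 / ((l.factorial : ℝ) * ((n - l).factorial : ℝ))) * genocchiPoly l y * y ^ (n - l)) x =
      2 ^ k * ∑ l ∈ Finset.Icc k n,
        (1 / (((l - k).factorial : ℝ) * ((n - l).factorial : ℝ))) *
          genocchiPoly (l - k) x * x ^ (n - l) := by
  have hconv : ∀ (m : ℕ) (y : ℝ), ∑ l ∈ range (m + 1),
      (1 / ((l.factorial : ℝ) * ((m - l).factorial : ℝ))) * genocchiPoly l y * y ^ (m - l) =
        ∑ p ∈ antidiagonal m, genocchiPoly p.1 y / p.1.factorial * (y ^ p.2 / p.2.factorial) :=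
    fun m y => by
      rw [Nat.sum_antidiagonal_eq_sum_range_succ_mk]
      refine sum_congr rfl fun l _ => ?_
      field_simp
  have hshift : ∑ l ∈ Icc k n,
      (1 / (((l - k).factorial : ℝ) * ((n - l).factorial : ℝ))) *
        genocchiPoly (l - k) x * x ^ (n - l) =
      ∑ l ∈ range (n - k + 1),
        (1 / ((l.factorial : ℝ) * ((n - k - l).factorial : ℝ))) *
          genocchiPoly l x * x ^ (n - k - l) := by
    rw [← Ico_add_one_right_eq_Icc, sum_Ico_eq_sum_range,
      show n + 1 - k = n - k + 1 by omega]
    refine sum_congr rfl fun l hl => ?_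
    rw [mem_range] at hl
    rw [show k + l - k = l by omega, show n - (k + l) = n - k - l by omega]
  simp only [hconv, hshift]
  rw [iteratedDeriv_sum_antidiagonal_mul hasDerivAt_genocchiPoly_div_factorial
    hasDerivAt_pow_div_factorial hk]

theorem iteratedDeriv_sum_genocchi_pow_factorial (n : ℕ) (hn : 1 ≤ n) (k : ℕ) (hk : k ≤ n)
    (x : ℝ) :
    iteratedDeriv k (fun y : ℝ => ∑ l ∈ Finset.range (n + 1),
        (1 / ((l.factorial : ℝ) * ((n - l).factorial : ℝ))) * genocchiPoly l y * y ^ (n - l)) x =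
      2 ^ k * ∑ l ∈ Finset.Icc k n,
        (1 / (((l - k).factorial : ℝ) * ((n - l).factorial : ℝ))) *
          genocchiPoly (l - k) x * x ^ (n - l) :=
  iteratedDeriv_sum_genocchi_pow_factorial_general n k hk x
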